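/- Let G be a rooted graph with root u which has a (2,3)-segmentation of width four whose head contains u. Then G has no rooted immersion of W_4. -/

import Mathlib

open scoped Classical

noncomputable section

namespace PaperW4

/-- A finite loopless undirected multigraph on ambient vertex type `V`:
a finite vertex set together with a multiset of (non-loop) edges supported on it. -/
structure MG (V : Type) where
  verts : Finset V
  edges : Multiset (Sym2 V)
  edge_support : ∀ e ∈ edges, ∀ v ∈ e, v ∈ verts
  loopless : ∀ e ∈ edges, ¬ e.IsDiag

variable {V : Type} {W : Type}

/-- `δ_G(X)`: the edges of `G` with exactly one endpoint in `X`. -/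
def cutEdges (G : MG V) (X : Finset V) : Multiset (Sym2 V) :=
  G.edges.filter fun e => ∃ u v, e = s(u, v) ∧ u ∈ X ∧ v ∉ X

/-- `d_G(X) = |δ_G(X)|`. -/
def dcut (G : MG V) (X : Finset V) : ℕ := (cutEdges G X).card

/-- The degree of a vertex: the number of edges incident with it. -/
def deg (G : MG V) (v : V) : ℕ := (G.edges.filter fun e => v ∈ e).card

/-- `e_G(u,v)`: the number of edges joining `u` and `v`. -/
def emult (G : MG V) (u v : V) : ℕ := G.edges.count s(u, v)

/-- `G` is `k`-edge-connected: every edge-cut `δ(X)` with `∅ ≠ X ⊊ V(G)` has size `≥ k`. -/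
def EdgeConn (G : MG V) (k : ℕ) : Prop :=
  ∀ X : Finset V, X ⊆ G.verts → X.Nonempty → X ≠ G.verts → k ≤ dcut G X

/-- `G` is internally `k`-edge-connected: every edge-cut with at least two vertices
on each side has size `≥ k`. -/
def InternallyEdgeConn (G : MG V) (k : ℕ) : Prop :=
  ∀ X : Finset V, X ⊆ G.verts → 2 ≤ X.card → 2 ≤ (G.verts \ X).card → k ≤ dcut G X

/-- Every vertex has degree three. -/
def Cubic (G : MG V) : Prop := ∀ v ∈ G.verts, deg G v = 3

/-- The multiset of edges traversed by a walk, given as its list of vertices. -/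
def walkEdges (l : List V) : Multiset (Sym2 V) :=
  (↑((l.zip l.tail).map fun p => s(p.1, p.2)) : Multiset (Sym2 V))

/-- `l` is (the vertex sequence of) a walk from `u` to `v`. -/
def IsWalk (l : List V) (u v : V) : Prop :=
  l.head? = some u ∧ l.getLast? = some v

/-- `G` is connected: any two of its vertices are joined by a trail in `G`. -/
def Connected (G : MG V) : Prop :=
  ∀ u ∈ G.verts, ∀ v ∈ G.verts,
    ∃ l : List V, IsWalk l u v ∧ walkEdges l ≤ G.edges ∧ ∀ w ∈ l, w ∈ G.verts

/-- An immersion of the loopless multigraph with vertex type `W` and edge multiset `H`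
into `G`, with terminal map `φ`: `φ` is injective, and to each edge `uv` of `H` is
assigned a walk in `G` from `φ u` to `φ v`, these walks being globally edge-disjoint. -/
def ImmersionVia (G : MG V) (H : Multiset (Sym2 W)) (φ : W → V) : Prop :=
  Function.Injective φ ∧ (∀ w : W, φ w ∈ G.verts) ∧
  ∃ P : Multiset (Sym2 W × List V),
    P.map Prod.fst = H ∧
    (∀ p ∈ P, ∃ u v : W, p.1 = s(u, v) ∧ IsWalk p.2 (φ u) (φ v)) ∧
    (P.map fun p => walkEdges p.2).sum ≤ G.edges

/-- The edges of the wheel `W₄`: vertex `0` is the center, `1,2,3,4` the rim cycle. -/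
def w4Edges : Multiset (Sym2 (Fin 5)) :=
  {s(0, 1), s(0, 2), s(0, 3), s(0, 4), s(1, 2), s(2, 3), s(3, 4), s(4, 1)}

/-- `G` has an immersion of `W₄`. -/
def HasW4Immersion (G : MG V) : Prop :=
  ∃ φ : Fin 5 → V, ImmersionVia G w4Edges φ

/-- `G` (rooted at `x`) has a rooted immersion of `W₄`: one in which the
center of `W₄` corresponds to `x`. -/
def HasRootedW4Immersion (G : MG V) (x : V) : Prop :=
  ∃ φ : Fin 5 → V, φ 0 = x ∧ ImmersionVia G w4Edges φ

/-- The edges of `D_m`: roots are `0, 1`; vertices `2, 3` play the role of `y₀, y₁`;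
there are `m - 2` parallel edges between the two roots. -/
def dmEdges (m : ℕ) : Multiset (Sym2 (Fin 4)) :=
  Multiset.replicate (m - 2) s(0, 1) + {s(0, 2), s(0, 3), s(1, 2), s(1, 3), s(2, 3)}

/-- `G` with roots `x0, x1` has a rooted immersion of `D_m`. -/
def HasRootedDmImmersion (G : MG V) (m : ℕ) (x0 x1 : V) : Prop :=
  ∃ φ : Fin 4 → V, φ 0 = x0 ∧ φ 1 = x1 ∧ ImmersionVia G (dmEdges m) φ

/-- The edges of `K₄`. -/
def k4Edges : Multiset (Sym2 (Fin 4)) :=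
  {s(0, 1), s(0, 2), s(0, 3), s(1, 2), s(1, 3), s(2, 3)}

/-- A nested chain of vertex sets `C 0 ⊂ C 1 ⊂ ⋯`, each obtained from the previous
by adding one vertex, all cuts having size exactly `k`. -/
def SegChain (G : MG V) (n : ℕ) (C : Fin (n + 1) → Finset V) (k : ℕ) : Prop :=
  (∀ i, C i ⊆ G.verts) ∧
  (∀ i : Fin n, C i.castSucc ⊆ C i.succ ∧ (C i.succ \ C i.castSucc).card = 1) ∧
  (∀ i, dcut G (C i) = k)

/-- `G` has a segmentation of width `k` relative to `(X, Y)`. -/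
def HasSegmentation (G : MG V) (X Y : Finset V) (k : ℕ) : Prop :=
  ∃ (n : ℕ) (C : Fin (n + 1) → Finset V),
    SegChain G n C k ∧ C 0 = X ∧ G.verts \ C (Fin.last n) = Y

/-- `λ_s(G) ≥ m`: every edge-cut separating `x0` from `x1` has size `≥ m`. -/
def LamSGe (G : MG V) (x0 x1 : V) (m : ℕ) : Prop :=
  ∀ X : Finset V, X ⊆ G.verts → x0 ∈ X → x1 ∉ X → m ≤ dcut G X

/-- `λ_n(G) ≥ m`: every edge-cut not separating `x0` from `x1` has size `≥ m`. -/
def LamNGe (G : MG V) (x0 x1 : V) (m : ℕ) : Prop :=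
  ∀ X : Finset V, X ⊆ G.verts → X.Nonempty → X ≠ G.verts →
    (x0 ∈ X ↔ x1 ∈ X) → m ≤ dcut G X

/-- `λ_n^i(G) ≥ m`: every internal edge-cut not separating `x0` from `x1` has size `≥ m`. -/
def LamNiGe (G : MG V) (x0 x1 : V) (m : ℕ) : Prop :=
  ∀ X : Finset V, X ⊆ G.verts → 2 ≤ X.card → 2 ≤ (G.verts \ X).card →
    (x0 ∈ X ↔ x1 ∈ X) → m ≤ dcut G X

/-- The subgraph of `G` induced on `S`. -/
def induce (G : MG V) (S : Finset V) : MG V where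
  verts := G.verts ∩ S
  edges := G.edges.filter fun e => ∀ v ∈ e, v ∈ S
  edge_support := by
    intro e he v hv
    rw [Multiset.mem_filter] at he
    exact Finset.mem_inter.mpr ⟨G.edge_support e he.1 v hv, he.2 v hv⟩
  loopless := fun e he => G.loopless e (Multiset.mem_of_mem_filter he)

/-- `G` with the vertices of `S` (and all incident edges) deleted. -/
def deleteVerts (G : MG V) (S : Finset V) : MG V := induce G (G.verts \ S)

/-- `C` is (the vertex set of) a connected component of `G`. -/
def IsComponent (G : MG V) (C : Finset V) : Prop :=
  C ⊆ G.verts ∧ C.Nonempty ∧ Connected (induce G C) ∧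
  ∀ e ∈ G.edges, (∃ v ∈ e, v ∈ C) → ∀ v ∈ e, v ∈ C

/-- `G` has type `A_m` with respect to roots `x0, x1`. -/
def TypeA (G : MG V) (m : ℕ) (x0 x1 : V) : Prop :=
  ∃ X0 X1 : Finset V, x0 ∈ X0 ∧ x1 ∈ X1 ∧ X0.card ≤ 2 ∧ X1.card ≤ 2 ∧
    HasSegmentation G X0 X1 m

/-- The edges of the lobe of `G` (with roots `x0, x1`) corresponding to the
component `C` of `G ∖ {x0, x1}`: edges inside `C ∪ {x0, x1}` other than `x0x1`-edges. -/
def lobeEdges (G : MG V) (C : Finset V) (x0 x1 : V) : Multiset (Sym2 V) :=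
  G.edges.filter fun e => (∀ v ∈ e, v ∈ insert x0 (insert x1 C)) ∧ e ≠ s(x0, x1)

/-- `G` has type `B_m` with respect to roots `x0, x1`. -/
def TypeB (G : MG V) (m : ℕ) (x0 x1 : V) : Prop :=
  ∃ (k : ℕ) (C : Fin k → Finset V) (nL : Fin k → ℕ),
    Function.Injective C ∧
    (∀ D : Finset V, IsComponent (deleteVerts G {x0, x1}) D ↔ ∃ i, C i = D) ∧
    (∀ i : Fin k, 2 ≤ nL i ∧
      ∃ l : List V, l.Nodup ∧ IsWalk l x0 x1 ∧
        l.toFinset = insert x0 (insert x1 (C i)) ∧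
        (2 ≤ (C i).card → nL i = 2) ∧
        lobeEdges G (C i) x0 x1 = nL i • walkEdges l) ∧
    emult G x0 x1 + ∑ i, nL i = m + 1

/-- The edge multiset of a cycle of length `n` on the vertices `f 0, f 1, …`. -/
def cycleEdges (n : ℕ) (f : Fin n → V) : Multiset (Sym2 V) :=
  (Finset.univ.val : Multiset (Fin n)).map fun i =>
    s(f i, f ⟨(i.val + 1) % n, Nat.mod_lt _ i.pos⟩)

/-- `G` is a doubled cycle of length `n`. -/
def IsDoubledCycleLen (G : MG V) (n : ℕ) : Prop :=
  ∃ f : Fin n → V, Function.Injective f ∧ Finset.univ.image f = G.verts ∧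
    G.edges = 2 • cycleEdges n f

/-- `G` is a doubled cycle. -/
def IsDoubledCycle (G : MG V) : Prop := ∃ n, 3 ≤ n ∧ IsDoubledCycleLen G n

/-- The map collapsing all of `Y` to the vertex `y0` and fixing everything else. -/
def collapseFun (Y : Finset V) (y0 : V) : V → V := fun v => if v ∈ Y then y0 else v

/-- The image multigraph of `G` under a vertex map `f` (identification of vertices),
with any created loops deleted. -/
def mapGraph (f : V → V) (G : MG V) : MG V where
  verts := G.verts.image f
  edges := (G.edges.map (Sym2.map f)).filter fun e => ¬e.IsDiag
  edge_support := by
    intro e he v hv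
    rw [Multiset.mem_filter] at he
    obtain ⟨he, -⟩ := he
    rw [Multiset.mem_map] at he
    obtain ⟨e', he', rfl⟩ := he
    rw [Sym2.mem_map] at hv
    obtain ⟨u, hu, rfl⟩ := hv
    exact Finset.mem_image_of_mem f (G.edge_support e' he' u hu)
  loopless := by
    intro e he
    rw [Multiset.mem_filter] at he
    exact he.2

/-- `G[X]` is a chain of sausages of order `k` in `G`: identifying `V(G) ∖ X` to a
single vertex yields a doubled cycle of length `k + 1`. -/
def ChainOfSausages (G : MG V) (X : Finset V) (k : ℕ) : Prop :=
  X ⊆ G.verts ∧ X.card = k ∧ 2 ≤ k ∧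
  ∃ y0 ∈ G.verts \ X,
    IsDoubledCycleLen (mapGraph (collapseFun (G.verts \ X) y0) G) (k + 1)

/-- `G` is sausage reduced: it has no chain of sausages of order at least `3`. -/
def SausageReduced (G : MG V) : Prop :=
  ¬ ∃ (X : Finset V) (k : ℕ), 3 ≤ k ∧ ChainOfSausages G X k

/-- One sausage shortening step of a rooted graph: two adjacent vertices of a chain of
sausages of order at least three are identified, carrying the root along. -/
def RootedShortStep (p q : MG V × V) : Prop :=
  ∃ (X : Finset V) (k : ℕ) (a b : V),
    3 ≤ k ∧ ChainOfSausages p.1 X k ∧ a ∈ X ∧ b ∈ X ∧ a ≠ b ∧ s(a, b) ∈ p.1.edges ∧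
    q.1 = mapGraph (fun v => if v = b then a else v) p.1 ∧
    q.2 = (if p.2 = b then a else p.2)

/-- Deleting a single copy of the edge `e` from `G`. -/
def deleteEdge (G : MG V) (e : Sym2 V) : MG V where
  verts := G.verts
  edges := G.edges.erase e
  edge_support := fun e' he' => G.edge_support e' (Multiset.mem_of_mem_erase he')
  loopless := fun e' he' => G.loopless e' (Multiset.mem_of_mem_erase he')

/-- `G` has a tree-decomposition of width at most `k`. -/
def HasTreeDecomp (G : MG V) (k : ℕ) : Prop :=
  ∃ (ι : Type) (T : SimpleGraph ι) (B : ι → Finset V),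
    T.IsTree ∧
    (∀ t, B t ⊆ G.verts) ∧
    (∀ v ∈ G.verts, ∃ t, v ∈ B t) ∧
    (∀ e ∈ G.edges, ∃ t, ∀ v ∈ e, v ∈ B t) ∧
    (∀ v ∈ G.verts, (SimpleGraph.induce {t | v ∈ B t} T).Connected) ∧
    ∀ t, (B t).card ≤ k + 1

/-- The tree-width of `G`. -/
def treewidth (G : MG V) : ℕ := sInf { k | HasTreeDecomp G k }

/-- One subdivision step: an edge `uv` is replaced by a path `u - w - v`
through a new vertex `w`. -/
def SubdivStep (G H : MG V) : Prop :=
  ∃ u v w : V, s(u, v) ∈ G.edges ∧ w ∉ G.verts ∧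
    H.verts = insert w G.verts ∧
    H.edges = (G.edges.erase s(u, v)) + {s(u, w), s(w, v)}

/-- `H` is a subdivision of `G`. -/
def IsSubdivision (G H : MG V) : Prop := Relation.ReflTransGen SubdivStep G H

/-- `G`, rooted at `u`, has type 2 (for the rooted `W₄` theorem). -/
def TypeTwo (G : MG V) (u : V) : Prop :=
  ∃ W0 : Finset V, W0 ⊆ G.verts ∧ u ∉ W0 ∧ 1 ≤ W0.card ∧ W0.card ≤ 2 ∧
    ∃ w0 ∈ W0,
      ∃ n : ℕ, 3 ≤ n ∧
        ∃ f : Fin n → V,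
          Function.Injective f ∧
          Finset.univ.image f = (mapGraph (collapseFun W0 w0) G).verts ∧
          (∃ i, f i = u) ∧ (∃ j, f j = w0) ∧
          ((s(u, w0) ∉ cycleEdges n f ∧
              (mapGraph (collapseFun W0 w0) G).edges =
                2 • cycleEdges n f + {s(u, w0)}) ∨
           (∃ v : V, s(u, v) ∈ cycleEdges n f ∧ s(v, w0) ∈ cycleEdges n f ∧
              (mapGraph (collapseFun W0 w0) G).edges =
                2 • cycleEdges n f + {s(u, v), s(v, w0)}) ∨
           (s(u, w0) ∈ cycleEdges n f ∧
              (mapGraph (collapseFun W0 w0) G).edges =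
                2 • cycleEdges n f + {s(u, w0)}))


private lemma walkEdges_cons_cons (x y : V) (t : List V) :
    walkEdges (x :: y :: t) = s(x, y) ::ₘ walkEdges (y :: t) := rfl

private lemma walk_cross (Z : Finset V) :
    ∀ (l : List V) (a b : V), l.head? = some a → l.getLast? = some b →
      ¬ (a ∈ Z ↔ b ∈ Z) →
      ∃ e ∈ walkEdges l, ∃ x y, e = s(x, y) ∧ x ∈ Z ∧ y ∉ Z := by
  intro l
  induction l with
  | nil => intro a b h; simp at h
  | cons x t ih =>
    intro a b ha hb hxor
    simp only [List.head?_cons, Option.some.injEq] at ha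
    subst ha
    cases t with
    | nil =>
      simp only [List.getLast?_singleton, Option.some.injEq] at hb
      subst hb; exact absurd Iff.rfl hxor
    | cons y t' =>
      by_cases hy : (x ∈ Z ↔ y ∈ Z)
      · have hb' : (y :: t').getLast? = some b := by
          rwa [List.getLast?_cons_cons] at hb
        obtain ⟨e, he, hcr⟩ := ih y b rfl hb' (fun h => hxor (hy.trans h))
        exact ⟨e, by rw [walkEdges_cons_cons]; exact Multiset.mem_cons_of_mem he, hcr⟩
      · refine ⟨s(x, y), by rw [walkEdges_cons_cons]; exact Multiset.mem_cons_self _ _, ?_⟩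
        by_cases hx : x ∈ Z
        · exact ⟨x, y, rfl, hx, fun hyZ => hy ⟨fun _ => hyZ, fun _ => hx⟩⟩
        · have hyZ : y ∈ Z := by tauto
          exact ⟨y, x, by rw [Sym2.eq_swap], hyZ, hx⟩

private lemma crossing_bound (G : MG V) (H : Multiset (Sym2 W)) (φ : W → V) (Z : Finset V)
    (himm : ImmersionVia G H φ) :
    (H.filter fun e => ∃ a b, e = s(a, b) ∧ φ a ∈ Z ∧ φ b ∉ Z).card ≤ dcut G Z := by
  classical
  obtain ⟨-, -, P, hmap, hwalk, hle⟩ := himm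
  set cross : Sym2 V → Prop := fun e => ∃ x y, e = s(x, y) ∧ x ∈ Z ∧ y ∉ Z with hcrossdef
  set q : Sym2 W → Prop := fun e => ∃ a b, e = s(a, b) ∧ φ a ∈ Z ∧ φ b ∉ Z with hqdef
  have step1 : (H.filter q).card = (P.filter fun p => q p.1).card := by
    rw [← hmap, Multiset.filter_map, Multiset.card_map]
    rfl
  have step2 : ∀ Q : Multiset (Sym2 W × List V),
      (∀ p ∈ Q, ∃ u v : W, p.1 = s(u, v) ∧ IsWalk p.2 (φ u) (φ v)) →
      (Q.filter fun p => q p.1).card ≤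
        (((Q.map fun p => walkEdges p.2).sum).filter cross).card := by
    intro Q
    induction Q using Multiset.induction_on with
    | empty => intro _; simp
    | cons a s ih =>
      intro hQ
      have hs := ih fun p hp => hQ p (Multiset.mem_cons_of_mem hp)
      rw [Multiset.filter_cons, Multiset.map_cons, Multiset.sum_cons,
        Multiset.filter_add, Multiset.card_add, Multiset.card_add]
      by_cases hqa : q a.1
      · obtain ⟨u, v, huv, hw1, hw2⟩ := hQ a (Multiset.mem_cons_self _ _)
        have hxor : ¬ (φ u ∈ Z ↔ φ v ∈ Z) := by
          obtain ⟨x, y, hxy, hx, hy⟩ := hqa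
          rw [huv, Sym2.eq_iff] at hxy
          rcases hxy with ⟨rfl, rfl⟩ | ⟨rfl, rfl⟩ <;> tauto
        obtain ⟨e, he, hcr⟩ := walk_cross Z a.2 (φ u) (φ v) hw1 hw2 hxor
        have h1 : 0 < ((walkEdges a.2).filter cross).card :=
          Multiset.card_pos_iff_exists_mem.mpr ⟨e, Multiset.mem_filter.mpr ⟨he, hcr⟩⟩
        rw [if_pos hqa, Multiset.card_singleton]
        omega
      · rw [if_neg hqa]
        simpa using Nat.le_add_left _ _ |>.trans (Nat.add_le_add_left hs _) |>.trans (le_refl _)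
  have step3 := step2 P hwalk
  have step4 : (((P.map fun p => walkEdges p.2).sum).filter cross).card ≤ dcut G Z :=
    Multiset.card_le_card (Multiset.filter_le_filter cross hle)
  show (H.filter q).card ≤ dcut G Z
  omega

private lemma q_sym2 (φ : Fin 5 → V) (Z : Finset V) (a b : Fin 5) :
    (∃ x y, s(a, b) = s(x, y) ∧ φ x ∈ Z ∧ φ y ∉ Z) ↔
      ((φ a ∈ Z ∧ φ b ∉ Z) ∨ (φ b ∈ Z ∧ φ a ∉ Z)) := by
  constructor
  · rintro ⟨x, y, hxy, hx, hy⟩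
    rw [Sym2.eq_iff] at hxy
    rcases hxy with ⟨rfl, rfl⟩ | ⟨rfl, rfl⟩ <;> tauto
  · rintro (⟨h1, h2⟩ | ⟨h1, h2⟩)
    · exact ⟨a, b, rfl, h1, h2⟩
    · exact ⟨b, a, by rw [Sym2.eq_swap], h1, h2⟩

private lemma sep_pair (φ : Fin 5 → V) (Z : Finset V) (r : Fin 5) (hr : r ≠ 0)
    (hmem : ∀ j : Fin 5, φ j ∈ Z ↔ (j = 0 ∨ j = r)) :
    (w4Edges.filter fun e => ∃ a b, e = s(a, b) ∧ φ a ∈ Z ∧ φ b ∉ Z).card = 5 := by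
  fin_cases r
  · exact absurd rfl hr
  all_goals {
    simp only [w4Edges, Multiset.insert_eq_cons, Multiset.filter_cons, q_sym2, hmem]
    simp (config := { decide := true }) }

/-- Let `G` be a rooted graph with root `u` which has a
`(2,3)`-segmentation of width four whose head contains `u`.  Then `G` has no rooted
immersion of `W₄`. -/
theorem statement_15 {V : Type} (G : MG V) (u : V)
    (hu : u ∈ G.verts) (hconn : Connected G)
    (X Y : Finset V) (huX : u ∈ X) (hX : X.card ≤ 2) (hY : Y.card ≤ 3)
    (hseg : HasSegmentation G X Y 4) :
    ¬ HasRootedW4Immersion G u := by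
  rintro ⟨φ, hφ0, himm⟩
  obtain ⟨n, C, ⟨hCsub, hCstep, hCcut⟩, hC0, hClast⟩ := hseg
  have hmin : ∀ k : ℕ, min k n < n + 1 := fun k => Nat.lt_succ_of_le (min_le_right _ _)
  set D : ℕ → Finset V := fun k => C ⟨min k n, hmin k⟩ with hD
  have hD0 : D 0 = X := by
    have h : (⟨min 0 n, hmin 0⟩ : Fin (n + 1)) = 0 := by
      ext; simp
    rw [hD]; simp only [h, hC0]
  have hDn : D n = C (Fin.last n) := by
    have h : (⟨min n n, hmin n⟩ : Fin (n + 1)) = Fin.last n := by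
      ext; simp [Fin.last]
    rw [hD]; simp only [h]
  have hDcut : ∀ k, dcut G (D k) = 4 := fun k => hCcut _
  have hDstep : ∀ k, D k ⊆ D (k + 1) ∧ (D (k + 1) \ D k).card ≤ 1 := by
    intro k
    by_cases h : k < n
    · have h1 : (⟨min k n, hmin k⟩ : Fin (n + 1)) = (⟨k, h⟩ : Fin n).castSucc := by
        ext; simp [Fin.castSucc, Fin.castAdd, Fin.castLE]; omega
      have h2 : (⟨min (k + 1) n, hmin (k + 1)⟩ : Fin (n + 1)) = (⟨k, h⟩ : Fin n).succ := by
        ext; simp [Fin.succ]; omega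
      obtain ⟨hsub, hcard⟩ := hCstep ⟨k, h⟩
      rw [hD]
      simp only [h1, h2]
      exact ⟨hsub, le_of_eq hcard⟩
    · have h1 : min k n = min (k + 1) n := by omega
      rw [hD]
      simp only [h1]
      refine ⟨subset_rfl, ?_⟩
      simp
  have hDmono : ∀ j k : ℕ, j ≤ k → D j ⊆ D k := by
    intro j k hjk
    induction k with
    | zero => have : j = 0 := by omega
              rw [this]
    | succ m ihm =>
      rcases Nat.lt_or_ge j (m + 1) with h | h
      · exact (ihm (by omega)).trans (hDstep m).1
      · have : j = m + 1 := by omega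
        rw [this]
  set T : ℕ → Finset (Fin 5) := fun k => Finset.univ.filter fun a => φ a ∈ D k with hT
  have hTmem : ∀ k (a : Fin 5), a ∈ T k ↔ φ a ∈ D k := by
    intro k a; rw [hT]; simp
  have hT0 : (0 : Fin 5) ∈ T 0 := by
    rw [hTmem, hD0, hφ0]; exact huX
  have hTmono : ∀ j k : ℕ, j ≤ k → T j ⊆ T k := by
    intro j k hjk a ha
    rw [hTmem] at ha ⊢
    exact hDmono j k hjk ha
  obtain ⟨hinj, hverts, hP⟩ := himm
  have hTstep : ∀ k, (T (k + 1) \ T k).card ≤ 1 := by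
    intro k
    have := Finset.card_le_card_of_injOn φ (s := T (k + 1) \ T k) (t := D (k + 1) \ D k)
      (fun a ha => by
        rw [Finset.mem_coe, Finset.mem_sdiff] at ha
        rw [Finset.mem_coe, Finset.mem_sdiff]
        exact ⟨(hTmem (k + 1) a).mp ha.1, fun h => ha.2 ((hTmem k a).mpr h)⟩)
      (hinj.injOn)
    exact this.trans (hDstep k).2
  have hTn : 2 ≤ (T n).card := by
    have hcompl : (Finset.univ \ T n).card ≤ 3 := by
      have := Finset.card_le_card_of_injOn φ (s := Finset.univ \ T n) (t := Y)
        (fun a ha => by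
          rw [Finset.mem_coe, Finset.mem_sdiff] at ha
          have h1 : φ a ∉ D n := fun h => ha.2 ((hTmem n a).mpr h)
          rw [hDn] at h1
          rw [Finset.mem_coe, ← hClast, Finset.mem_sdiff]
          exact ⟨hverts a, h1⟩)
        (hinj.injOn)
      exact this.trans hY
    have h5 : (Finset.univ : Finset (Fin 5)).card = 5 := by simp
    have hsd : (Finset.univ \ T n).card = 5 - (T n).card := by
      rw [Finset.card_sdiff_of_subset (Finset.subset_univ _), h5]
    have hle5 := Finset.card_le_card (Finset.subset_univ (T n))
    omega
  have hT0card : (T 0).card ≤ 2 := by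
    have := Finset.card_le_card_of_injOn φ (s := T 0) (t := X)
      (fun a ha => by rw [Finset.mem_coe, hTmem, hD0] at ha; exact ha)
      (hinj.injOn)
    exact this.trans hX
  have hex : ∃ k, 2 ≤ (T k).card := ⟨n, hTn⟩
  obtain ⟨m, hm2, hmmin⟩ : ∃ m, 2 ≤ (T m).card ∧ ∀ j, j < m → (T j).card ≤ 1 :=
    ⟨Nat.find hex, Nat.find_spec hex, fun j hj => by
      have := Nat.find_min hex hj; omega⟩
  have hcard2 : (T m).card = 2 := by
    have hle2 : (T m).card ≤ 2 := by
      rcases Nat.eq_zero_or_pos m with h0 | hpos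
      · rw [h0]; exact hT0card
      · obtain ⟨j, hj⟩ : ∃ j, m = j + 1 := ⟨m - 1, by omega⟩
        have hj1 : (T j).card ≤ 1 := hmmin j (by omega)
        have hstep := hTstep j
        rw [hj]
        calc (T (j + 1)).card ≤ ((T (j + 1)) \ T j).card + (T j).card :=
              Finset.card_le_card_sdiff_add_card
          _ ≤ 2 := by omega
    omega
  have h0m : (0 : Fin 5) ∈ T m := hTmono 0 m (Nat.zero_le _) hT0
  obtain ⟨x, y, hxy, hTmeq⟩ := Finset.card_eq_two.mp hcard2
  have hrex : ∃ r : Fin 5, r ≠ 0 ∧ T m = {0, r} := by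
    rw [hTmeq] at h0m
    rcases Finset.mem_insert.mp h0m with h | h
    · refine ⟨y, ?_, by rw [hTmeq, ← h]⟩
      intro hy; exact hxy (by rw [← h, hy])
    · rw [Finset.mem_singleton] at h
      refine ⟨x, ?_, by rw [hTmeq, ← h, Finset.pair_comm]⟩
      intro hx; exact hxy (by rw [hx, h])
  obtain ⟨r, hr, hTmr⟩ := hrex
  have hmembZ : ∀ j : Fin 5, φ j ∈ D m ↔ (j = 0 ∨ j = r) := by
    intro j
    rw [← hTmem, hTmr]
    simp
  have h5 := sep_pair φ (D m) r hr hmembZ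
  have hb := crossing_bound G w4Edges φ (D m) ⟨hinj, hverts, hP⟩
  have hb' : (w4Edges.filter fun e => ∃ a b, e = s(a, b) ∧ φ a ∈ D m ∧ φ b ∉ D m).card
      ≤ dcut G (D m) := by
    convert hb using 3
  have hfin : (5 : ℕ) ≤ 4 := (h5.symm.trans_le hb').trans_eq (hDcut m)
  omega


end PaperW4
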